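/- (VLB nonlinear cut.) For all reals v_i, v_j, θ with vl_i ≤ v_i ≤ vu_i, vl_j ≤ v_j ≤ vu_j and θl ≤ θ ≤ θu, setting w_i = v_i², wR = v_i·v_j·cos θ and wI = v_i·v_j·sin θ, one has c21·wR + c22·wI + c23·w_i + c24·(wR² + wI²)/w_i + c25 ≥ 0, where c21 = vσ_i·vσ_j·cos φ, c22 = vσ_i·vσ_j·sin φ, c23 = −vl_j·cos δ·vσ_j, c24 = −vl_i·cos δ·vσ_i, c25 = vl_i·vl_j·cos δ·(vl_i·vl_j − vu_i·vu_j). -/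

import Mathlib

/-!
Since `wR² + wI² = w_i w_j`, the cut only involves `v_i v_j cos (θ - φ)` and a polynomial in
`v_i, v_j`. Because `|θ - φ| ≤ δ ≤ π / 2`, we have `cos (θ - φ) ≥ cos δ ≥ 0`, so it suffices to show
the polynomial inequality obtained by replacing `cos (θ - φ)` with `cos δ`; that polynomial is a
nonnegative combination of the McCormick products `(v_i - vl_i)(vu_i - v_i)`,
`(v_j - vl_j)(vu_j - v_j)` and `(v_i - vl_i)(v_j - vl_j)`.
-/

open Real

lemma Real.cos_le_cos_of_abs_le {x y : ℝ} (hxy : |x| ≤ y) (hy : y ≤ π) : cos y ≤ cos x := by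
  rw [← cos_abs x]
  exact cos_le_cos_of_nonneg_of_le_pi (abs_nonneg x) hy hxy

lemma sq_mul_cos_add_sq_mul_sin_div_sq {x : ℝ} (hx : x ≠ 0) (y θ : ℝ) :
    ((x * y * cos θ) ^ 2 + (x * y * sin θ) ^ 2) / x ^ 2 = y ^ 2 := by
  have hsum : (x * y * cos θ) ^ 2 + (x * y * sin θ) ^ 2 = y ^ 2 * x ^ 2 := by
    linear_combination (x * y) ^ 2 * cos_sq_add_sin_sq θ
  rw [hsum, mul_div_cancel_right₀ _ (pow_ne_zero 2 hx)]

lemma vlb_polynomial_nonneg {li ui lj uj x y : ℝ} (hli : 0 ≤ li) (hlj : 0 ≤ lj)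
    (hlx : li ≤ x) (hxu : x ≤ ui) (hly : lj ≤ y) (hyu : y ≤ uj) :
    0 ≤ (li + ui) * (lj + uj) * x * y - lj * (lj + uj) * x ^ 2 - li * (li + ui) * y ^ 2
      + li * lj * (li * lj - ui * uj) := by
  have hσi : 0 ≤ li + ui := by linarith
  have hσj : 0 ≤ lj + uj := by linarith
  have hx : 0 ≤ (x - li) * (ui - x) := mul_nonneg (by linarith) (by linarith)
  have hy : 0 ≤ (y - lj) * (uj - y) := mul_nonneg (by linarith) (by linarith)
  have hxy : 0 ≤ (x - li) * (y - lj) := mul_nonneg (by linarith) (by linarith)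
  calc 0 ≤ lj * (lj + uj) * ((x - li) * (ui - x)) + li * (li + ui) * ((y - lj) * (uj - y))
        + (li + ui) * (lj + uj) * ((x - li) * (y - lj)) := by positivity
    _ = _ := by ring

theorem vlb_nonlinear_cut_valid_general
    (vli vui vlj vuj θl θu φ δ vσi vσj : ℝ)
    (hvli : 0 < vli) (hvlj : 0 < vlj)
    (hθl : -(Real.pi / 2) ≤ θl) (hθu : θu ≤ Real.pi / 2)
    (hφ : φ = (θu + θl) / 2) (hδ : δ = (θu - θl) / 2)
    (hσi : vσi = vli + vui) (hσj : vσj = vlj + vuj) :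
    ∀ vi vj θ : ℝ, vli ≤ vi → vi ≤ vui → vlj ≤ vj → vj ≤ vuj → θl ≤ θ → θ ≤ θu →
      vσi * vσj * Real.cos φ * (vi * vj * Real.cos θ)
        + vσi * vσj * Real.sin φ * (vi * vj * Real.sin θ)
        + (-(vlj * Real.cos δ * vσj)) * vi ^ 2
        + (-(vli * Real.cos δ * vσi)) *
            (((vi * vj * Real.cos θ) ^ 2 + (vi * vj * Real.sin θ) ^ 2) / vi ^ 2)
        + vli * vlj * Real.cos δ * (vli * vlj - vui * vuj) ≥ 0 := by
  intro vi vj θ hlvi hviu hlvj hvju hlθ hθu'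
  subst hσi hσj
  have hvi : 0 < vi := hvli.trans_le hlvi
  have hvj : 0 < vj := hvlj.trans_le hlvj
  rw [sq_mul_cos_add_sq_mul_sin_div_sq hvi.ne']
  have hcos : cos δ ≤ cos (θ - φ) :=
    cos_le_cos_of_abs_le (abs_le.2 ⟨by linarith, by linarith⟩) (by linarith [pi_pos])
  have hcosδ : 0 ≤ cos δ := cos_nonneg_of_mem_Icc ⟨by linarith, by linarith⟩
  have hpoly := vlb_polynomial_nonneg hvli.le hvlj.le hlvi hviu hlvj hvju
  have hprod : 0 ≤ (vli + vui) * (vlj + vuj) * vi * vj := by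
    have := hvi.trans_le hviu
    have := hvj.trans_le hvju
    positivity
  calc _ = (vli + vui) * (vlj + vuj) * vi * vj * (cos (θ - φ) - cos δ)
        + cos δ * ((vli + vui) * (vlj + vuj) * vi * vj - vlj * (vlj + vuj) * vi ^ 2
          - vli * (vli + vui) * vj ^ 2 + vli * vlj * (vli * vlj - vui * vuj)) := by
        rw [cos_sub]; ring
    _ ≥ 0 := add_nonneg (mul_nonneg hprod (sub_nonneg.2 hcos)) (mul_nonneg hcosδ hpoly)

theorem vlb_nonlinear_cut_valid
    (vli vui vlj vuj θl θu φ δ vσi vσj : ℝ)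
    (hvli : 0 < vli) (hvi : vli ≤ vui) (hvlj : 0 < vlj) (hvj : vlj ≤ vuj)
    (hθl : -(Real.pi / 2) ≤ θl) (hθ : θl ≤ θu) (hθu : θu ≤ Real.pi / 2)
    (hφ : φ = (θu + θl) / 2) (hδ : δ = (θu - θl) / 2)
    (hσi : vσi = vli + vui) (hσj : vσj = vlj + vuj) :
    ∀ vi vj θ : ℝ, vli ≤ vi → vi ≤ vui → vlj ≤ vj → vj ≤ vuj → θl ≤ θ → θ ≤ θu →
      vσi * vσj * Real.cos φ * (vi * vj * Real.cos θ)
        + vσi * vσj * Real.sin φ * (vi * vj * Real.sin θ)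
        + (-(vlj * Real.cos δ * vσj)) * vi ^ 2
        + (-(vli * Real.cos δ * vσi)) *
            (((vi * vj * Real.cos θ) ^ 2 + (vi * vj * Real.sin θ) ^ 2) / vi ^ 2)
        + vli * vlj * Real.cos δ * (vli * vlj - vui * vuj) ≥ 0 :=
  vlb_nonlinear_cut_valid_general vli vui vlj vuj θl θu φ δ vσi vσj hvli hvlj hθl hθu hφ hδ hσi hσj
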